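/- (Theorem 3, upper bound.) Let λ* ∈ Λ and suppose that α(G_λ^n) ≤ α(G_{λ*}^n) for every λ ∈ Λ and every n ≥ 1, and that the limit Ξ = lim_{n→∞} α(G_{λ*}^n)^{1/n} exists. Then for every sequence (g_n*)_{n≥1} of Stackelberg equilibrium strategies of the receiver, limsup_{n→∞} R(g_n*) ≤ Ξ. -/

import Mathlib

noncomputable section

namespace IE

/-- The `n`-letter utility: `U_n(x̂, x, λ) = (1/n) ∑ᵢ U(x̂ᵢ, xᵢ, λ)`. -/
def Un {X Λ : Type*} [Fintype X] (U : X → X → Λ → ℝ) (n : ℕ)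
    (xh x : Fin n → X) (t : Λ) : ℝ :=
  (1 / (n : ℝ)) * ∑ i, U (xh i) (x i) t

/-- The `λ`-partition of a set `I ⊆ X^n`. -/
def lamPart {X Λ : Type*} [Fintype X] (U : X → X → Λ → ℝ) (n : ℕ)
    (I : Set (Fin n → X)) (t : Λ) : Set (Fin n → X) :=
  {x | x ∈ I ∧ ∀ y ∈ I, y ≠ x → Un U n x x t > Un U n y x t}

/-- The best-response set of sender type `λ` to a receiver strategy `g`. -/
def BR {X Λ : Type*} [Fintype X] (U : X → X → Λ → ℝ) (n : ℕ)
    (g : (Fin n → X) → (Fin n → X)) (t : Λ) :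
    Set ((Fin n → X) → (Fin n → X)) :=
  {s | ∀ x : Fin n → X, ∀ s' : (Fin n → X) → (Fin n → X),
    Un U n (g (s x)) x t ≥ Un U n (g (s' x)) x t}

/-- The set of perfectly recovered sequences `D(g,s)`. -/
def Drec {X : Type*} (n : ℕ) (g s : (Fin n → X) → (Fin n → X)) :
    Set (Fin n → X) :=
  {x | g (s x) = x}

/-- `min_{s ∈ B(g,λ)} |D(g,s)|`. -/
def minD {X Λ : Type*} [Fintype X] (U : X → X → Λ → ℝ) (n : ℕ)
    (g : (Fin n → X) → (Fin n → X)) (t : Λ) : ℕ :=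
  sInf ((fun s => (Drec n g s).ncard) '' BR U n g t)

/-- `D*(g) = ∑_λ P(λ) · min_{s ∈ B(g,λ)} |D(g,s)|`. -/
def Dstar {X Λ : Type*} [Fintype X] [Fintype Λ] (U : X → X → Λ → ℝ)
    (P : Λ → ℝ) (n : ℕ) (g : (Fin n → X) → (Fin n → X)) : ℝ :=
  ∑ t, P t * (minD U n g t : ℝ)

/-- The sender graph `G_λ^n` on `X^n`. -/
def senderGraph {X Λ : Type*} [Fintype X] (U : X → X → Λ → ℝ) (n : ℕ)
    (t : Λ) : SimpleGraph (Fin n → X) where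
  Adj x y := x ≠ y ∧ (Un U n x x t ≤ Un U n y x t ∨ Un U n y y t ≤ Un U n x y t)
  symm := by
    constructor
    intro x y h
    exact ⟨h.1.symm, h.2.symm⟩
  loopless := by
    constructor
    intro x h
    exact h.1 rfl

/-- The single-letter sender graph `G_λ` on `X`. -/
def senderGraph1 {X Λ : Type*} (U : X → X → Λ → ℝ) (t : Λ) :
    SimpleGraph X where
  Adj x y := x ≠ y ∧ (U x x t ≤ U y x t ∨ U y y t ≤ U x y t)
  symm := by
    constructor
    intro x y h
    exact ⟨h.1.symm, h.2.symm⟩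
  loopless := by
    constructor
    intro x h
    exact h.1 rfl

/-- A set of vertices is independent in a graph. -/
def IsIndep {V : Type*} (G : SimpleGraph V) (s : Set V) : Prop :=
  ∀ ⦃x⦄, x ∈ s → ∀ ⦃y⦄, y ∈ s → ¬ G.Adj x y

/-- The independence number `α(G)` of a graph on a finite vertex set. -/
def alpha {V : Type*} [Fintype V] (G : SimpleGraph V) : ℕ :=
  sSup {k | ∃ s : Set V, IsIndep G s ∧ s.ncard = k}

end IE

/-!
A sender of type `λ` whose sequence `x` is recovered never gains by imitating another recovered
sequence `y`, so `U_n(x,x,λ) ≥ U_n(y,x,λ)`. If equality held, redirecting `x` to the signal of `y`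
would give another best response recovering strictly fewer sequences. Hence the recovered set of
a best response with the fewest recoveries is independent in `G_λ^n`, so `D*(g) ≤ α(G_{λ*}^n)`
for every receiver strategy `g`, and taking `n`-th roots gives the bound.
-/

namespace IE

variable {X Λ : Type*} {n : ℕ} {g s : (Fin n → X) → (Fin n → X)}

theorem IsIndep.ncard_le_alpha {V : Type*} [Fintype V] {G : SimpleGraph V} {s : Set V}
    (hs : IsIndep G s) : s.ncard ≤ alpha G := by
  refine le_csSup ⟨Fintype.card V, ?_⟩ ⟨s, hs, rfl⟩
  rintro k ⟨s, -, rfl⟩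
  simpa using Set.ncard_le_ncard (Set.subset_univ s)

theorem Drec_update_ssubset [DecidableEq X] {x y : Fin n → X} (hx : x ∈ Drec n g s)
    (hy : y ∈ Drec n g s) (hxy : x ≠ y) :
    Drec n g (Function.update s x (s y)) ⊂ Drec n g s := by
  have hgy : g (s y) = y := hy
  have hx' : x ∉ Drec n g (Function.update s x (s y)) := by
    simpa [Drec, hgy] using hxy.symm
  refine Set.ssubset_iff_of_subset (fun z hz => ?_) |>.2 ⟨x, hx, hx'⟩
  rcases eq_or_ne z x with rfl | hzx
  · exact absurd hz hx'
  · simpa [Drec, Function.update_of_ne hzx] using hz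

variable [Fintype X] {U : X → X → Λ → ℝ} {t : Λ}

theorem Un_le_Un_self_of_mem_BR (hs : s ∈ BR U n g t) {x y : Fin n → X}
    (hx : x ∈ Drec n g s) (hy : y ∈ Drec n g s) : Un U n y x t ≤ Un U n x x t := by
  have hgx : g (s x) = x := hx
  have hgy : g (s y) = y := hy
  simpa [hgx, hgy] using hs x (fun _ => s y)

theorem update_mem_BR [DecidableEq X] (hs : s ∈ BR U n g t) {x y : Fin n → X}
    (hy : y ∈ Drec n g s) (htie : Un U n y x t = Un U n (g (s x)) x t) :
    Function.update s x (s y) ∈ BR U n g t := by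
  intro z s'
  rcases eq_or_ne z x with rfl | hzx
  · have hgy : g (s y) = y := hy
    simpa only [Function.update_self, hgy, htie] using hs z s'
  · simpa only [Function.update_of_ne hzx] using hs z s'

theorem exists_mem_BR_ncard_eq_minD (hBR : (BR U n g t).Nonempty) :
    ∃ s ∈ BR U n g t, (Drec n g s).ncard = minD U n g t :=
  Nat.sInf_mem (hBR.image _)

theorem isIndep_Drec_of_ncard_eq_minD (hs : s ∈ BR U n g t)
    (hmin : (Drec n g s).ncard = minD U n g t) :
    IsIndep (senderGraph U n t) (Drec n g s) := by
  classical
  have key : ∀ ⦃x y⦄, x ∈ Drec n g s → y ∈ Drec n g s → x ≠ y →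
      ¬ Un U n x x t ≤ Un U n y x t := by
    intro x y hx hy hxy hle
    have htie : Un U n y x t = Un U n (g (s x)) x t := by
      rw [show g (s x) = x from hx]
      exact le_antisymm (Un_le_Un_self_of_mem_BR hs hx hy) hle
    have hlt := Set.ncard_lt_ncard (Drec_update_ssubset hx hy hxy) (Set.toFinite _)
    have hge : minD U n g t ≤ (Drec n g (Function.update s x (s y))).ncard :=
      Nat.sInf_le ⟨_, update_mem_BR hs hy htie, rfl⟩
    omega
  rintro x hx y hy ⟨hxy, hle | hle⟩
  · exact key hx hy hxy hle
  · exact key hy hx hxy.symm hle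

theorem minD_le_alpha : minD U n g t ≤ alpha (senderGraph U n t) := by
  rcases (BR U n g t).eq_empty_or_nonempty with hBR | hBR
  · simp [minD, hBR]
  obtain ⟨s, hs, hmin⟩ := exists_mem_BR_ncard_eq_minD hBR
  exact hmin ▸ (isIndep_Drec_of_ncard_eq_minD hs hmin).ncard_le_alpha

variable [Fintype Λ] {P : Λ → ℝ}

theorem Dstar_nonneg (hP0 : ∀ t, 0 ≤ P t) : 0 ≤ Dstar U P n g :=
  Finset.sum_nonneg fun t _ => mul_nonneg (hP0 t) (Nat.cast_nonneg _)

theorem Dstar_le_of_forall_minD_le (hP0 : ∀ t, 0 ≤ P t) (hP1 : ∑ t, P t = 1) {A : ℝ}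
    (hA : ∀ t, (minD U n g t : ℝ) ≤ A) : Dstar U P n g ≤ A :=
  calc Dstar U P n g ≤ ∑ t, P t * A :=
        Finset.sum_le_sum fun t _ => mul_le_mul_of_nonneg_left (hA t) (hP0 t)
    _ = A := by rw [← Finset.sum_mul, hP1, one_mul]

end IE

open IE Filter

theorem limsup_le_of_eventually_le_of_tendsto {u v : ℕ → ℝ} {L : ℝ} (hu : ∀ n, 0 ≤ u n)
    (huv : ∀ᶠ n in atTop, u n ≤ v n) (hv : Tendsto v atTop (nhds L)) :
    limsup u atTop ≤ L :=
  hv.limsup_eq ▸ limsup_le_limsup huv (isCoboundedUnder_le_of_le atTop hu) hv.isBoundedUnder_le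

theorem stmt15_general {X Λ : Type*} [Fintype X] [Fintype Λ]
    (U : X → X → Λ → ℝ) (P : Λ → ℝ) (hP0 : ∀ t, 0 ≤ P t) (hP1 : ∑ t, P t = 1)
    (ts : Λ)
    (hdom : ∀ t : Λ, ∀ n : ℕ, 1 ≤ n →
      IE.alpha (IE.senderGraph U n t) ≤ IE.alpha (IE.senderGraph U n ts))
    (Xi : ℝ)
    (hXi : Filter.Tendsto
      (fun n : ℕ => (IE.alpha (IE.senderGraph U n ts) : ℝ) ^ ((1 : ℝ) / n))
      Filter.atTop (nhds Xi))
    (gstar : ∀ n : ℕ, (Fin n → X) → (Fin n → X)) :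
    Filter.limsup (fun n : ℕ => IE.Dstar U P n (gstar n) ^ ((1 : ℝ) / n)) Filter.atTop
      ≤ Xi := by
  refine limsup_le_of_eventually_le_of_tendsto
    (fun n => Real.rpow_nonneg (Dstar_nonneg hP0) _) ?_ hXi
  filter_upwards [eventually_ge_atTop 1] with n hn
  have hDstar : Dstar U P n (gstar n) ≤ alpha (senderGraph U n ts) :=
    Dstar_le_of_forall_minD_le hP0 hP1 fun t => by
      exact_mod_cast minD_le_alpha.trans (hdom t n hn)
  exact Real.rpow_le_rpow (Dstar_nonneg hP0) hDstar (by positivity)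

/-- Theorem 3, upper bound: if `α(G_λ^n) ≤ α(G_{λ*}^n)` for all `λ`
and `n ≥ 1` and `α(G_{λ*}^n)^{1/n} → Ξ`, then for any sequence of Stackelberg
equilibrium strategies, `limsup_n R(g_n*) ≤ Ξ`. -/
theorem stmt15 {X Λ : Type*} [Fintype X] [Nonempty X] [Fintype Λ] [Nonempty Λ]
    (U : X → X → Λ → ℝ) (P : Λ → ℝ) (hP0 : ∀ t, 0 ≤ P t) (hP1 : ∑ t, P t = 1)
    (ts : Λ)
    (hdom : ∀ t : Λ, ∀ n : ℕ, 1 ≤ n →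
      IE.alpha (IE.senderGraph U n t) ≤ IE.alpha (IE.senderGraph U n ts))
    (Xi : ℝ)
    (hXi : Filter.Tendsto
      (fun n : ℕ => (IE.alpha (IE.senderGraph U n ts) : ℝ) ^ ((1 : ℝ) / n))
      Filter.atTop (nhds Xi))
    (gstar : ∀ n : ℕ, (Fin n → X) → (Fin n → X))
    (hstar : ∀ n : ℕ, 1 ≤ n → ∀ g : (Fin n → X) → (Fin n → X),
      IE.Dstar U P n g ≤ IE.Dstar U P n (gstar n)) :
    Filter.limsup (fun n : ℕ => IE.Dstar U P n (gstar n) ^ ((1 : ℝ) / n)) Filter.atTop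
      ≤ Xi :=
  stmt15_general U P hP0 hP1 ts hdom Xi hXi gstar
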